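/- With the min-cost flow instance (G, c)^i_x of the previous construction, a solution x ≥ 0 satisfies the robust constraint ∑_j (ā_{ij} + d^S_{ij}) x_j ≤ b_i for every feasible scenario S if and only if ā_i'x − c*_i(x) ≤ b_i, where c*_i(x) is the minimum cost of an integral s–t flow of value n in (G, c)^i_x. -/

import Mathlib

/-!
Integral flows of value `n` are exactly the band assignments `σ` (the unit of `v_j` goes to
`w_{σ j}`) with band sizes `θ`, and such a flow costs `-∑ d_j(σ j) x_j`. Each assignment yields
the feasible scenario `S_j = d_j(σ j)`, because `l ≤ θ ≤ u`. Conversely, the band sizes `c` of a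
feasible scenario satisfy `l ≤ c ≤ u` and `∑ c = n`; as `θ` takes the lower bounds below `p` and
the upper bounds above it, every prefix sum of `θ` is at most that of `c`. Hence the indices can
be moved up into higher bands until the band sizes are `θ`, which only increases each `S_j`
(it stays `≤ d_j(σ j)`). So the worst feasible scenario has value `-c*`.
-/

open scoped Classical

/-- `v` falls in band `k`: band `K⁻` is the single point `d K⁻`,
band `k > K⁻` is the interval `(d (k-1), d k]`. -/
def inBand (d : ℤ → ℝ) (Km k : ℤ) (v : ℝ) : Prop :=
  if k = Km then v = d Km else d (k-1) < v ∧ v ≤ d k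

/-- Integral `s`-`t` flow of value `n` in the auxiliary network: components are the
flows on arcs `(s,v_j)`, `(v_j,w_k)` and `(w_k,t)`. -/
def IsMBFlow (n : ℕ) (Km Kp : ℤ) (θ : ℤ → ℤ)
    (f : (Fin n → ℤ) × (Fin n → ℤ → ℤ) × (ℤ → ℤ)) : Prop :=
  (∀ j, 0 ≤ f.1 j ∧ f.1 j ≤ 1) ∧
  (∀ j, ∀ k ∈ Finset.Icc Km Kp, 0 ≤ f.2.1 j k ∧ f.2.1 j k ≤ 1) ∧
  (∀ k ∈ Finset.Icc Km Kp, 0 ≤ f.2.2 k ∧ f.2.2 k ≤ θ k) ∧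
  (∀ j, f.1 j = ∑ k ∈ Finset.Icc Km Kp, f.2.1 j k) ∧
  (∀ k ∈ Finset.Icc Km Kp, ∑ j, f.2.1 j k = f.2.2 k) ∧
  (∑ j, f.1 j = (n : ℤ))

/-- Cost of a flow: arcs `(v_j,w_k)` have cost `-d^k_j x_j`, all other arcs cost 0. -/
noncomputable def MBcost (n : ℕ) (Km Kp : ℤ) (d : Fin n → ℤ → ℝ) (x : Fin n → ℝ)
    (f : (Fin n → ℤ) × (Fin n → ℤ → ℤ) × (ℤ → ℤ)) : ℝ :=
  ∑ j, ∑ k ∈ Finset.Icc Km Kp, (-(d j k * x j)) * (f.2.1 j k : ℝ)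

open Finset

lemma sum_Icc_eq_sum_Icc_add_sum_Icc {M : Type*} [AddCommMonoid M] (f : ℤ → M) {a b c : ℤ}
    (hac : a ≤ c + 1) (hcb : c ≤ b) :
    ∑ i ∈ Icc a b, f i = ∑ i ∈ Icc a c, f i + ∑ i ∈ Icc (c + 1) b, f i := by
  rw [← sum_union (disjoint_left.2 fun i hi hi' => by simp only [mem_Icc] at hi hi'; omega)]
  congr 1
  ext i
  simp only [mem_union, mem_Icc]
  omega

section Bands

variable {d : ℤ → ℝ} {Km Kp k k' : ℤ} {v : ℝ}

lemma inBand.le (h : inBand d Km k v) : v ≤ d k := by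
  unfold inBand at h
  split_ifs at h with hk
  · exact hk ▸ h.le
  · exact h.2

lemma inBand_self (hd : StrictMonoOn d (Set.Icc Km Kp)) (hk : k ∈ Icc Km Kp) :
    inBand d Km k (d k) := by
  rw [mem_Icc] at hk
  unfold inBand
  split_ifs with hkm
  · rw [hkm]
  · exact ⟨hd ⟨by omega, by omega⟩ ⟨hk.1, hk.2⟩ (by omega), le_rfl⟩

lemma exists_inBand (hK : Km ≤ Kp) (h₁ : d Km ≤ v) (h₂ : v ≤ d Kp) :
    ∃ k ∈ Icc Km Kp, inBand d Km k v := by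
  induction Kp, hK using Int.leInduction with
  | base => exact ⟨Km, by simp, by simp [inBand, le_antisymm h₂ h₁]⟩
  | succ n hn ih =>
    by_cases hv : v ≤ d n
    · obtain ⟨k, hk, hkv⟩ := ih hv
      exact ⟨k, Icc_subset_Icc_right (by omega) hk, hkv⟩
    · refine ⟨n + 1, mem_Icc.2 ⟨by omega, le_rfl⟩, ?_⟩
      simp only [inBand, show n + 1 ≠ Km by omega, if_false, add_sub_cancel_right]
      exact ⟨not_le.1 hv, h₂⟩

lemma inBand_unique (hd : StrictMonoOn d (Set.Icc Km Kp)) (hk : k ∈ Icc Km Kp)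
    (hk' : k' ∈ Icc Km Kp) (h : inBand d Km k v) (h' : inBand d Km k' v) : k = k' := by
  -- if `k < k'` then `v ≤ d k ≤ d (k' - 1) < v`
  have key : ∀ {k k'}, k ∈ Icc Km Kp → k' ∈ Icc Km Kp → inBand d Km k v →
      inBand d Km k' v → ¬ k < k' := by
    intro k k' hk hk' h h' hlt
    rw [mem_Icc] at hk hk'
    simp only [inBand, show k' ≠ Km by omega, if_false] at h'
    have := hd.monotoneOn ⟨hk.1, hk.2⟩ (⟨by omega, by omega⟩ : k' - 1 ∈ Set.Icc Km Kp)
      (by omega : k ≤ k' - 1)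
    linarith [h.le, h'.1]
  rcases lt_trichotomy k k' with hlt | heq | hgt
  · exact absurd hlt (key hk hk' h h')
  · exact heq
  · exact absurd hgt (key hk' hk h' h)

end Bands

section Assignments

variable {ι : Type*}

theorem exists_ge_of_sum_Icc_le (J : Finset ι) (k : ι → ℤ) (θ : ℤ → ℤ) (Km Kp : ℤ)
    (hθ : ∀ q ∈ Icc Km Kp, 0 ≤ θ q)
    (hprefix : ∀ q ∈ Icc Km Kp, ∑ i ∈ Icc Km q, θ i ≤ #{j ∈ J | k j ≤ q})
    (htotal : ∑ q ∈ Icc Km Kp, θ q = #J) :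
    ∃ σ : ι → ℤ, (∀ j ∈ J, k j ≤ σ j ∧ σ j ∈ Icc Km Kp) ∧
      ∀ q ∈ Icc Km Kp, (#{j ∈ J | σ j = q} : ℤ) = θ q := by
  by_cases hK : Kp < Km
  · obtain rfl : J = ∅ := by simpa [Icc_eq_empty_of_lt hK, eq_comm] using htotal
    exact ⟨k, by simp, by simp [Icc_eq_empty_of_lt hK]⟩
  have hKm : Km ∈ Icc Km Kp := left_mem_Icc.2 (not_lt.1 hK)
  have hsplit : ∀ q, Km ≤ q → ∑ i ∈ Icc Km q, θ i = θ Km + ∑ i ∈ Icc (Km + 1) q, θ i :=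
    fun q hq => by rw [← insert_Icc_add_one_left_eq_Icc hq, sum_insert (by simp)]
  -- fill band `Km` with indices from below, then recurse on `[Km + 1, Kp]`
  obtain ⟨B, hB, hBcard⟩ : ∃ B ⊆ {j ∈ J | k j ≤ Km}, #B = (θ Km).toNat :=
    exists_subset_card_eq <| by
      have := hprefix Km hKm
      simp only [Icc_self, sum_singleton] at this
      omega
  have hBJ : B ⊆ J := hB.trans (filter_subset _ _)
  have hBk : ∀ j ∈ B, k j ≤ Km := fun j hj => (mem_filter.1 (hB hj)).2
  have hθKm : (#B : ℤ) = θ Km := by rw [hBcard]; exact Int.toNat_of_nonneg (hθ Km hKm)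
  obtain ⟨σ, hσ, hσcount⟩ := exists_ge_of_sum_Icc_le (J \ B) k θ (Km + 1) Kp
    (fun q hq => hθ q (Icc_subset_Icc_left (by omega) hq))
    (fun q hq => by
      rw [mem_Icc] at hq
      have hfilter : {j ∈ J \ B | k j ≤ q} = {j ∈ J | k j ≤ q} \ B := by
        ext j; simp only [mem_filter, mem_sdiff]; tauto
      have hBq : B ⊆ {j ∈ J | k j ≤ q} :=
        fun j hj => mem_filter.2 ⟨hBJ hj, (hBk j hj).trans (by omega)⟩
      have := hprefix q (mem_Icc.2 ⟨by omega, hq.2⟩)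
      rw [hfilter, card_sdiff_of_subset hBq, Nat.cast_sub (card_le_card hBq), hθKm]
      linarith [hsplit q (by omega)])
    (by
      rw [card_sdiff_of_subset hBJ, Nat.cast_sub (card_le_card hBJ), hθKm, ← htotal,
        hsplit Kp (not_lt.1 hK)]
      ring)
  refine ⟨B.piecewise (fun _ => Km) σ, fun j hj => ?_, fun q hq => ?_⟩
  · by_cases hjB : j ∈ B
    · simpa [hjB] using ⟨hBk j hjB, not_lt.1 hK⟩
    · have := hσ j (mem_sdiff.2 ⟨hj, hjB⟩)
      simp only [piecewise_eq_of_notMem _ _ _ hjB, mem_Icc] at this ⊢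
      omega
  · rcases eq_or_ne q Km with rfl | hqKm
    · rw [← hθKm]
      congr 2
      ext j
      by_cases hjB : j ∈ B
      · simp [hjB, hBJ hjB]
      · have := fun hj => (mem_Icc.1 (hσ j (mem_sdiff.2 ⟨hj, hjB⟩)).2).1
        simp only [mem_filter, piecewise_eq_of_notMem _ _ _ hjB, hjB, iff_false]
        exact fun h => by have := this h.1; omega
    · rw [← hσcount q (by simp only [mem_Icc] at hq ⊢; omega)]
      congr 2
      ext j
      by_cases hjB : j ∈ B <;> simp [hjB, Ne.symm hqKm]
termination_by (Kp + 1 - Km).toNat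
decreasing_by omega

variable [Fintype ι]

def IsBandAssignment (Km Kp : ℤ) (θ : ℤ → ℤ) (σ : ι → ℤ) : Prop :=
  (∀ j, σ j ∈ Icc Km Kp) ∧ ∀ q ∈ Icc Km Kp, (#{j | σ j = q} : ℤ) = θ q

lemma card_filter_le_eq_sum_Icc (k : ι → ℤ) {Km : ℤ} (hk : ∀ j, Km ≤ k j) (q : ℤ) :
    (#{j | k j ≤ q} : ℤ) = ∑ i ∈ Icc Km q, (#{j | k j = i} : ℤ) := by
  rw [card_eq_sum_card_fiberwise (f := k) (t := Icc Km q)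
    (fun j hj => mem_Icc.2 ⟨hk j, (mem_filter.1 hj).2⟩), Nat.cast_sum]
  refine sum_congr rfl fun i hi => ?_
  rw [filter_filter]
  congr 3
  ext j
  simp only [and_iff_right_iff_imp]
  exact fun h => h ▸ (mem_Icc.1 hi).2

theorem exists_isBandAssignment_ge (k : ι → ℤ) (θ : ℤ → ℤ) (Km Kp : ℤ)
    (hθ : ∀ q ∈ Icc Km Kp, 0 ≤ θ q)
    (hprefix : ∀ q ∈ Icc Km Kp, ∑ i ∈ Icc Km q, θ i ≤ #{j | k j ≤ q})
    (htotal : ∑ q ∈ Icc Km Kp, θ q = Fintype.card ι) :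
    ∃ σ, IsBandAssignment Km Kp θ σ ∧ ∀ j, k j ≤ σ j := by
  obtain ⟨σ, hσ, hcount⟩ := exists_ge_of_sum_Icc_le univ k θ Km Kp hθ hprefix htotal
  exact ⟨σ, ⟨fun j => (hσ j (mem_univ j)).2, hcount⟩, fun j => (hσ j (mem_univ j)).1⟩

theorem exists_isBandAssignment_isMax (θ : ℤ → ℤ) (Km Kp : ℤ)
    (hθ : ∀ q ∈ Icc Km Kp, 0 ≤ θ q) (htotal : ∑ q ∈ Icc Km Kp, θ q = Fintype.card ι)
    (w : ι → ℤ → ℝ) :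
    ∃ σ, IsBandAssignment Km Kp θ σ ∧
      ∀ τ, IsBandAssignment Km Kp θ τ → ∑ j, w j (τ j) ≤ ∑ j, w j (σ j) := by
  set A := {σ ∈ Fintype.piFinset fun _ : ι => Icc Km Kp | IsBandAssignment Km Kp θ σ}
  have hA : ∀ σ, σ ∈ A ↔ IsBandAssignment Km Kp θ σ := fun σ => by
    simp only [A, mem_filter, Fintype.mem_piFinset, and_iff_right_iff_imp]
    exact fun h => h.1
  obtain ⟨σ₀, hσ₀, -⟩ := exists_isBandAssignment_ge (fun _ => Km) θ Km Kp hθ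
    (fun q hq => by
      simpa [(mem_Icc.1 hq).1, ← htotal] using
        sum_le_sum_of_subset_of_nonneg (Icc_subset_Icc_right (mem_Icc.1 hq).2)
          fun i hi _ => hθ i hi)
    htotal
  obtain ⟨σ, hσ, hmax⟩ := exists_max_image A (fun σ => ∑ j, w j (σ j)) ⟨σ₀, (hA σ₀).2 hσ₀⟩
  exact ⟨σ, (hA σ).1 hσ, fun τ hτ => hmax τ ((hA τ).2 hτ)⟩

end Assignments

section Profiles

variable {l u θ : ℤ → ℤ} {Km Kp p : ℤ}

lemma sum_Icc_le_of_profile (hθlt : ∀ k, k < p → θ k = l k) (hθgt : ∀ k, p < k → θ k = u k)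
    {c : ℤ → ℤ} (hc : ∀ k ∈ Icc Km Kp, l k ≤ c k ∧ c k ≤ u k)
    (hsum : ∑ k ∈ Icc Km Kp, c k = ∑ k ∈ Icc Km Kp, θ k) {q : ℤ} (hq : q ∈ Icc Km Kp) :
    ∑ i ∈ Icc Km q, θ i ≤ ∑ i ∈ Icc Km q, c i := by
  rw [mem_Icc] at hq
  by_cases hqp : q < p
  · rw [sum_congr rfl fun i hi => hθlt i (by simp only [mem_Icc] at hi; omega)]
    exact sum_le_sum fun i hi => (hc i (by simp only [mem_Icc] at hi ⊢; omega)).1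
  · have htail : ∑ i ∈ Icc (q + 1) Kp, c i ≤ ∑ i ∈ Icc (q + 1) Kp, θ i := by
      rw [sum_congr rfl fun i hi => hθgt i (by simp only [mem_Icc] at hi; omega)]
      exact sum_le_sum fun i hi => (hc i (by simp only [mem_Icc] at hi ⊢; omega)).2
    rw [sum_Icc_eq_sum_Icc_add_sum_Icc c (by omega) hq.2,
      sum_Icc_eq_sum_Icc_add_sum_Icc θ (by omega) hq.2] at hsum
    linarith

lemma profile_mem_bounds {N : ℤ} (hlu : ∀ k ∈ Icc Km Kp, l k ≤ u k) (hp : p ∈ Icc Km Kp)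
    (hθlt : ∀ k, k < p → θ k = l k) (hθgt : ∀ k, p < k → θ k = u k)
    (hθsum : ∑ k ∈ Icc Km Kp, θ k = N)
    (hlow : ∑ i ∈ Icc Km p, l i + ∑ i ∈ Icc (p + 1) Kp, u i ≤ N)
    (hhigh : N ≤ ∑ i ∈ Icc Km (p - 1), l i + ∑ i ∈ Icc p Kp, u i) :
    ∀ k ∈ Icc Km Kp, l k ≤ θ k ∧ θ k ≤ u k := by
  rw [mem_Icc] at hp
  have hθp : θ p = N - ∑ i ∈ Icc Km (p - 1), l i - ∑ i ∈ Icc (p + 1) Kp, u i := by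
    rw [← hθsum,
      sum_Icc_eq_sum_Icc_add_sum_Icc θ (by omega : Km ≤ p - 1 + 1) (by omega : p - 1 ≤ Kp),
      sum_congr rfl fun i hi => hθlt i (by simp only [mem_Icc] at hi; omega), sub_add_cancel,
      sum_Icc_eq_sum_Icc_add_sum_Icc θ (by omega : p ≤ p + 1) hp.2, Icc_self, sum_singleton,
      sum_congr rfl fun i hi => hθgt i (by simp only [mem_Icc] at hi; omega)]
    ring
  rw [sum_Icc_eq_sum_Icc_add_sum_Icc l (by omega : Km ≤ p - 1 + 1) (by omega : p - 1 ≤ p),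
    sub_add_cancel, Icc_self, sum_singleton] at hlow
  rw [sum_Icc_eq_sum_Icc_add_sum_Icc u (by omega : p ≤ p + 1) hp.2, Icc_self,
    sum_singleton] at hhigh
  intro k hk
  rcases lt_trichotomy k p with h | rfl | h
  · rw [hθlt k h]; exact ⟨le_rfl, hlu k hk⟩
  · constructor <;> linarith
  · rw [hθgt k h]; exact ⟨hlu k hk, le_rfl⟩

lemma le_sum_Icc_of_minimal {N : ℤ} (h0 : 0 ∈ Icc Km Kp)
    (hu : ∀ k ∈ Icc Km Kp, 0 ≤ u k) (hu0 : u 0 = N) (hp : p ∈ Icc Km Kp)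
    (hpmin : ∀ k ∈ Icc Km Kp,
      ∑ i ∈ Icc Km k, l i + ∑ i ∈ Icc (k + 1) Kp, u i ≤ N → p ≤ k) :
    N ≤ ∑ i ∈ Icc Km (p - 1), l i + ∑ i ∈ Icc p Kp, u i := by
  rw [mem_Icc] at hp
  rcases hp.1.eq_or_lt with rfl | hlt
  · rw [Icc_eq_empty (by omega), sum_empty, zero_add, ← hu0]
    exact single_le_sum hu h0
  · have := mt (hpmin (p - 1) (mem_Icc.2 ⟨by omega, by omega⟩)) (by omega)
    rw [sub_add_cancel] at this
    exact (not_le.1 this).le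

end Profiles

section Flows

variable {n : ℕ} {Km Kp : ℤ} {θ : ℤ → ℤ}

def flowOf (θ : ℤ → ℤ) (σ : Fin n → ℤ) : (Fin n → ℤ) × (Fin n → ℤ → ℤ) × (ℤ → ℤ) :=
  (fun _ => 1, fun j k => if σ j = k then 1 else 0, θ)

lemma MBcost_eq_of_rows (d : Fin n → ℤ → ℝ) (x : Fin n → ℝ)
    {f : (Fin n → ℤ) × (Fin n → ℤ → ℤ) × (ℤ → ℤ)} {σ : Fin n → ℤ}
    (hσ : ∀ j, σ j ∈ Icc Km Kp)
    (hrow : ∀ j, ∀ k ∈ Icc Km Kp, f.2.1 j k = if σ j = k then 1 else 0) :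
    MBcost n Km Kp d x f = -∑ j, d j (σ j) * x j := by
  rw [MBcost, ← sum_neg_distrib]
  refine sum_congr rfl fun j _ => ?_
  rw [sum_congr rfl fun k hk => by rw [hrow j k hk]]
  simp [hσ j]

lemma isMBFlow_flowOf (hθ : ∀ k ∈ Icc Km Kp, 0 ≤ θ k) {σ : Fin n → ℤ}
    (hσ : IsBandAssignment Km Kp θ σ) : IsMBFlow n Km Kp θ (flowOf θ σ) := by
  refine ⟨fun j => by simp [flowOf], fun j k _ => ?_, fun k hk => ⟨hθ k hk, le_rfl⟩,
    fun j => ?_, fun k hk => ?_, by simp [flowOf]⟩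
  · simp only [flowOf]; split_ifs <;> simp
  · simp [flowOf, hσ.1 j]
  · simpa [flowOf, sum_boole] using hσ.2 k hk

lemma IsMBFlow.exists_isBandAssignment (hθ : ∑ k ∈ Icc Km Kp, θ k = n)
    {f : (Fin n → ℤ) × (Fin n → ℤ → ℤ) × (ℤ → ℤ)} (hf : IsMBFlow n Km Kp θ f) :
    ∃ σ, IsBandAssignment Km Kp θ σ ∧
      ∀ j, ∀ k ∈ Icc Km Kp, f.2.1 j k = if σ j = k then 1 else 0 := by
  obtain ⟨hs, hmid, ht, hv, hw, hval⟩ := hf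
  -- each bound below is tight because the corresponding totals agree
  have hs1 : ∀ j, f.1 j = 1 := fun j =>
    (sum_eq_sum_iff_of_le fun j _ => (hs j).2).1 (by simp [hval]) j (mem_univ j)
  have hrow : ∀ j, ∃ k ∈ Icc Km Kp, f.2.1 j k ≠ 0 := fun j => by
    by_contra! h
    have := (hv j).symm.trans (hs1 j)
    rw [sum_eq_zero h] at this
    exact zero_ne_one this
  choose σ hσ hσ0 using hrow
  have hσrow : ∀ j, ∀ k ∈ Icc Km Kp, f.2.1 j k = if σ j = k then 1 else 0 := fun j k hk => by
    refine ((sum_eq_sum_iff_of_le (f := fun k => if σ j = k then (1 : ℤ) else 0)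
      (g := f.2.1 j) fun k hk => ?_).1 ?_ k hk).symm
    · split_ifs with h
      · subst h; have := hmid j _ hk; have := hσ0 j; omega
      · exact (hmid j k hk).1
    · simp [hσ j, ← hv, hs1]
  have hwθ : ∀ k ∈ Icc Km Kp, f.2.2 k = θ k :=
    (sum_eq_sum_iff_of_le fun k hk => (ht k hk).2).1 <| by
      rw [hθ, ← hval, ← sum_congr rfl hw, sum_comm]
      exact sum_congr rfl fun j _ => (hv j).symm
  refine ⟨σ, ⟨hσ, fun q hq => ?_⟩, hσrow⟩
  rw [← hwθ q hq, ← hw q hq, sum_congr rfl fun j _ => hσrow j q hq, sum_boole]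

end Flows

section Scenarios

variable {ι : Type*} [Fintype ι] {Km Kp : ℤ} {d : ι → ℤ → ℝ} {l u θ : ℤ → ℤ}

def IsFeasibleScenario (Km Kp : ℤ) (d : ι → ℤ → ℝ) (l u : ℤ → ℤ) (S : ι → ℝ) : Prop :=
  (∀ j, d j Km ≤ S j ∧ S j ≤ d j Kp) ∧
    ∀ k ∈ Icc Km Kp, l k ≤ #{j | inBand (d j) Km k (S j)} ∧ #{j | inBand (d j) Km k (S j)} ≤ u k

lemma card_inBand_eq (hd : ∀ j, StrictMonoOn (d j) (Set.Icc Km Kp)) {S : ι → ℝ} {k : ι → ℤ}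
    (hk : ∀ j, k j ∈ Icc Km Kp) (hS : ∀ j, inBand (d j) Km (k j) (S j)) {q : ℤ}
    (hq : q ∈ Icc Km Kp) : #{j | inBand (d j) Km q (S j)} = #{j | k j = q} := by
  congr 1
  ext j
  simp only [mem_filter, mem_univ, true_and]
  exact ⟨fun h => inBand_unique (hd j) (hk j) hq (hS j) h, fun h => h ▸ hS j⟩

lemma isFeasibleScenario_of_isBandAssignment (hd : ∀ j, StrictMonoOn (d j) (Set.Icc Km Kp))
    {σ : ι → ℤ} (hσ : IsBandAssignment Km Kp θ σ) (hθ : ∀ k ∈ Icc Km Kp, l k ≤ θ k ∧ θ k ≤ u k) :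
    IsFeasibleScenario Km Kp d l u fun j => d j (σ j) := by
  refine ⟨fun j => ?_, fun k hk => ?_⟩
  · have hK := mem_Icc.1 (hσ.1 j)
    exact ⟨(hd j).monotoneOn ⟨le_rfl, hK.1.trans hK.2⟩ hK hK.1,
      (hd j).monotoneOn hK ⟨hK.1.trans hK.2, le_rfl⟩ hK.2⟩
  · rw [card_inBand_eq hd hσ.1 (fun j => inBand_self (hd j) (hσ.1 j)) hk, hσ.2 k hk]
    exact hθ k hk

lemma IsFeasibleScenario.exists_isBandAssignment_le (hd : ∀ j, StrictMonoOn (d j) (Set.Icc Km Kp))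
    (hK : Km ≤ Kp) {p : ℤ} (hθlt : ∀ k, k < p → θ k = l k) (hθgt : ∀ k, p < k → θ k = u k)
    (hθ : ∀ k ∈ Icc Km Kp, 0 ≤ θ k) (hθsum : ∑ k ∈ Icc Km Kp, θ k = Fintype.card ι)
    {S : ι → ℝ} (hS : IsFeasibleScenario Km Kp d l u S) :
    ∃ σ, IsBandAssignment Km Kp θ σ ∧ ∀ j, S j ≤ d j (σ j) := by
  choose k hk hkS using fun j => exists_inBand hK (hS.1 j).1 (hS.1 j).2
  have hkm : ∀ j, Km ≤ k j := fun j => (mem_Icc.1 (hk j)).1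
  have hcount : ∀ q ∈ Icc Km Kp, l q ≤ #{j | k j = q} ∧ #{j | k j = q} ≤ u q := fun q hq => by
    simpa only [card_inBand_eq hd hk hkS hq] using hS.2 q hq
  have hcsum : ∑ q ∈ Icc Km Kp, (#{j | k j = q} : ℤ) = ∑ q ∈ Icc Km Kp, θ q := by
    rw [← card_filter_le_eq_sum_Icc k hkm, hθsum,
      filter_true_of_mem fun j _ => (mem_Icc.1 (hk j)).2, card_univ]
  obtain ⟨σ, hσ, hkσ⟩ := exists_isBandAssignment_ge k θ Km Kp hθ
    (fun q hq => card_filter_le_eq_sum_Icc k hkm q ▸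
      sum_Icc_le_of_profile hθlt hθgt hcount hcsum hq)
    hθsum
  exact ⟨σ, hσ, fun j => (hkS j).le.trans
    ((hd j).monotoneOn (mem_Icc.1 (hk j)) (mem_Icc.1 (hσ.1 j)) (hkσ j))⟩

end Scenarios

theorem stmt9_general (n : ℕ) (Km Kp : ℤ) (hKm : Km ≤ 0) (hKp : 0 ≤ Kp)
    (d : Fin n → ℤ → ℝ)
    (hmono : ∀ j, StrictMonoOn (d j) (Set.Icc (Km:ℤ) Kp))
    (l u : ℤ → ℤ)
    (hbounds : ∀ k ∈ Finset.Icc Km Kp, 0 ≤ l k ∧ l k ≤ u k ∧ u k ≤ (n:ℤ))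
    (hu0 : u 0 = n)
    (p : ℤ) (hp : p ∈ Finset.Icc Km Kp)
    (hpfeas : (∑ i ∈ Finset.Icc Km p, l i) + (∑ i ∈ Finset.Icc (p+1) Kp, u i) ≤ (n:ℤ))
    (hpmin : ∀ k ∈ Finset.Icc Km Kp,
      (∑ i ∈ Finset.Icc Km k, l i) + (∑ i ∈ Finset.Icc (k+1) Kp, u i) ≤ (n:ℤ) → p ≤ k)
    (θ : ℤ → ℤ)
    (hθlt : ∀ k, k < p → θ k = l k)
    (hθgt : ∀ k, p < k → θ k = u k)
    (hθp : θ p = n - ∑ k ∈ (Finset.Icc Km Kp).erase p, θ k)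
    (abar : Fin n → ℝ) (b : ℝ) (x : Fin n → ℝ) (hx : ∀ j, 0 ≤ x j) :
    ∃ f : (Fin n → ℤ) × (Fin n → ℤ → ℤ) × (ℤ → ℤ),
      IsMBFlow n Km Kp θ f ∧
      (∀ f', IsMBFlow n Km Kp θ f' → MBcost n Km Kp d x f ≤ MBcost n Km Kp d x f') ∧
      ((∀ S : Fin n → ℝ,
          (∀ j, d j Km ≤ S j ∧ S j ≤ d j Kp) →
          (∀ k ∈ Finset.Icc Km Kp,
            l k ≤ ((Finset.univ.filter (fun j => inBand (d j) Km k (S j))).card : ℤ) ∧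
            ((Finset.univ.filter (fun j => inBand (d j) Km k (S j))).card : ℤ) ≤ u k) →
          ∑ j, (abar j + S j) * x j ≤ b) ↔
        (∑ j, abar j * x j) - MBcost n Km Kp d x f ≤ b) := by
  have hθsum : ∑ k ∈ Icc Km Kp, θ k = n := by rw [← add_sum_erase _ _ hp, hθp]; ring
  have hθ : ∀ k ∈ Icc Km Kp, l k ≤ θ k ∧ θ k ≤ u k :=
    profile_mem_bounds (fun k hk => (hbounds k hk).2.1) hp hθlt hθgt hθsum hpfeas
      (le_sum_Icc_of_minimal (mem_Icc.2 ⟨hKm, hKp⟩)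
        (fun k hk => (hbounds k hk).1.trans (hbounds k hk).2.1) hu0 hp hpmin)
  have hθ0 : ∀ k ∈ Icc Km Kp, 0 ≤ θ k := fun k hk => (hbounds k hk).1.trans (hθ k hk).1
  obtain ⟨σ, hσ, hmax⟩ := exists_isBandAssignment_isMax θ Km Kp hθ0 (by simpa using hθsum)
    fun j k => d j k * x j
  have hcost := MBcost_eq_of_rows d x hσ.1 (f := flowOf θ σ) fun _ _ _ => rfl
  refine ⟨flowOf θ σ, isMBFlow_flowOf hθ0 hσ, fun f hf => ?_, ?_⟩
  · obtain ⟨τ, hτ, hrow⟩ := hf.exists_isBandAssignment hθsum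
    rw [hcost, MBcost_eq_of_rows d x hτ.1 hrow]
    exact neg_le_neg (hmax τ hτ)
  simp only [hcost, sub_neg_eq_add, add_mul, sum_add_distrib]
  have hfeas := isFeasibleScenario_of_isBandAssignment hmono hσ hθ
  refine ⟨fun h => h _ hfeas.1 hfeas.2, fun h S hS₁ hS₂ => ?_⟩
  obtain ⟨τ, hτ, hSτ⟩ := IsFeasibleScenario.exists_isBandAssignment_le hmono (hKm.trans hKp)
    hθlt hθgt hθ0 (by simpa using hθsum) ⟨hS₁, hS₂⟩
  calc ∑ j, abar j * x j + ∑ j, S j * x j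
      ≤ ∑ j, abar j * x j + ∑ j, d j (τ j) * x j := by gcongr with j; exacts [hx j, hSτ j]
    _ ≤ ∑ j, abar j * x j + ∑ j, d j (σ j) * x j := add_le_add_right (hmax τ hτ) _
    _ ≤ b := h

theorem stmt9 (n : ℕ) (Km Kp : ℤ) (hKm : Km ≤ 0) (hKp : 0 ≤ Kp)
    (d : Fin n → ℤ → ℝ)
    (hmono : ∀ j, StrictMonoOn (d j) (Set.Icc (Km:ℤ) Kp))
    (hzero : ∀ j, d j 0 = 0)
    (l u : ℤ → ℤ)
    (hbounds : ∀ k ∈ Finset.Icc Km Kp, 0 ≤ l k ∧ l k ≤ u k ∧ u k ≤ (n:ℤ))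
    (hu0 : u 0 = n)
    (hsuml : ∑ k ∈ Finset.Icc Km Kp, l k ≤ (n:ℤ))
    (p : ℤ) (hp : p ∈ Finset.Icc Km Kp)
    (hpfeas : (∑ i ∈ Finset.Icc Km p, l i) + (∑ i ∈ Finset.Icc (p+1) Kp, u i) ≤ (n:ℤ))
    (hpmin : ∀ k ∈ Finset.Icc Km Kp,
      (∑ i ∈ Finset.Icc Km k, l i) + (∑ i ∈ Finset.Icc (k+1) Kp, u i) ≤ (n:ℤ) → p ≤ k)
    (θ : ℤ → ℤ)
    (hθlt : ∀ k, k < p → θ k = l k)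
    (hθgt : ∀ k, p < k → θ k = u k)
    (hθp : θ p = n - ∑ k ∈ (Finset.Icc Km Kp).erase p, θ k)
    (abar : Fin n → ℝ) (b : ℝ) (x : Fin n → ℝ) (hx : ∀ j, 0 ≤ x j) :
    ∃ f : (Fin n → ℤ) × (Fin n → ℤ → ℤ) × (ℤ → ℤ),
      IsMBFlow n Km Kp θ f ∧
      (∀ f', IsMBFlow n Km Kp θ f' → MBcost n Km Kp d x f ≤ MBcost n Km Kp d x f') ∧
      ((∀ S : Fin n → ℝ,
          (∀ j, d j Km ≤ S j ∧ S j ≤ d j Kp) →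
          (∀ k ∈ Finset.Icc Km Kp,
            l k ≤ ((Finset.univ.filter (fun j => inBand (d j) Km k (S j))).card : ℤ) ∧
            ((Finset.univ.filter (fun j => inBand (d j) Km k (S j))).card : ℤ) ≤ u k) →
          ∑ j, (abar j + S j) * x j ≤ b) ↔
        (∑ j, abar j * x j) - MBcost n Km Kp d x f ≤ b) :=
  stmt9_general n Km Kp hKm hKp d hmono l u hbounds hu0 p hp hpfeas hpmin θ hθlt hθgt hθp abar b x
    hx
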